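/- arXiv:2310.02984 — 2 statements merged into one kernel-verified Lean document; each statement's English description precedes it below -/
import Mathlib

section
/- Let p be a probability distribution on positive integers with p(x) = C_α x^{−α} for α > 1 (restricted to x ∈ [N] with appropriate normalization, or N = ∞). If (X_1,...,X_T) are i.i.d. samples from p, then the probability that a fresh sample X ~ p does not appear among X_1,...,X_T, namely Σ_x p(x)(1−p(x))^T, is bounded above and below by constant multiples of T^{−1+1/α}. -/
open Real

/-- Telescoping convexity bound: `β (y+1)^{-(β+1)} ≤ y^{-β} - (y+1)^{-β}` for `y ≥ 1`. -/
lemma tele_aux {β y : ℝ} (hβ : 0 < β) (hy : 1 ≤ y) :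
    β * (y + 1) ^ (-(β + 1)) ≤ y ^ (-β) - (y + 1) ^ (-β) := by
  have hb : (0:ℝ) < y + 1 := by linarith
  set s : ℝ := 1 / (y + 1) with hs
  have hs0 : 0 < s := by positivity
  have hs1 : s < 1 := by
    rw [hs, div_lt_one hb]; linarith
  -- (1-s)^β ≤ exp (-(s*β)) ≤ 1/(1+β*s)
  have h1 : (1 - s) ^ β ≤ Real.exp (-(s * β)) := by
    have e1 : 1 - s ≤ Real.exp (-s) := by
      have := Real.add_one_le_exp (-s); linarith
    calc (1 - s) ^ β ≤ (Real.exp (-s)) ^ β :=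
          Real.rpow_le_rpow (by linarith) e1 hβ.le
      _ = Real.exp (-(s * β)) := by rw [← Real.exp_mul]; ring_nf
  have h2 : Real.exp (-(s * β)) ≤ 1 / (1 + β * s) := by
    have e2 : 1 + β * s ≤ Real.exp (s * β) := by
      have := Real.add_one_le_exp (s * β); linarith [this]
    rw [Real.exp_neg]
    have hpos : (0:ℝ) < 1 + β * s := by positivity
    rw [inv_eq_one_div]
    exact one_div_le_one_div_of_le hpos e2
  have h3 : (1 + β * s) ≤ (1 - s) ^ (-β) := by
    have hp : (0:ℝ) < (1 - s) ^ β := Real.rpow_pos_of_pos (by linarith) β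
    have h12 : (1 - s) ^ β ≤ 1 / (1 + β * s) := h1.trans h2
    have hpos : (0:ℝ) < 1 + β * s := by positivity
    rw [Real.rpow_neg (by linarith), inv_eq_one_div]
    rw [le_div_iff₀ hp]
    calc (1 + β * s) * (1 - s) ^ β ≤ (1 + β * s) * (1 / (1 + β * s)) :=
          mul_le_mul_of_nonneg_left h12 hpos.le
      _ = 1 := by field_simp
  -- multiply by (y+1)^{-β}
  have hbpow : (0:ℝ) < (y + 1) ^ (-β) := Real.rpow_pos_of_pos hb _
  have h4 : (y + 1) ^ (-β) * (1 + β * s) ≤ y ^ (-β) := by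
    have : (y + 1) ^ (-β) * (1 - s) ^ (-β) = y ^ (-β) := by
      rw [← Real.mul_rpow hb.le (by linarith)]
      congr 1
      rw [hs]
      field_simp
      ring
    calc (y + 1) ^ (-β) * (1 + β * s) ≤ (y + 1) ^ (-β) * (1 - s) ^ (-β) :=
          mul_le_mul_of_nonneg_left h3 hbpow.le
      _ = y ^ (-β) := this
  have h5 : (y + 1) ^ (-(β + 1)) = (y + 1) ^ (-β) * s := by
    rw [show -(β + 1) = -β + -1 by ring, Real.rpow_add hb, Real.rpow_neg_one, hs]
    ring
  rw [h5]
  nlinarith [h4, hbpow]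

/-- `u (1-u)^T ≤ 1/T` for `u ∈ (0,1)`. -/
lemma term_le_aux {u : ℝ} (hu0 : 0 < u) (hu1 : u < 1) {T : ℕ} (hT : 1 ≤ T) :
    u * (1 - u) ^ T ≤ 1 / T := by
  have hT0 : (0:ℝ) < T := by exact_mod_cast hT
  have hP0 : (0:ℝ) ≤ (1 - u) ^ T := pow_nonneg (by linarith) T
  have hB : 1 + (T:ℝ) * u ≤ (1 + u) ^ T := by
    have := one_add_mul_le_pow (a := u) (by linarith) T
    linarith
  have hC : (1 - u) ^ T * (1 + u) ^ T ≤ 1 := by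
    rw [← mul_pow]
    apply pow_le_one₀ (by nlinarith) (by nlinarith)
  have h1 : (1 - u) ^ T * (1 + (T:ℝ) * u) ≤ 1 := by
    calc (1 - u) ^ T * (1 + (T:ℝ) * u) ≤ (1 - u) ^ T * (1 + u) ^ T :=
          mul_le_mul_of_nonneg_left hB hP0
      _ ≤ 1 := hC
  rw [le_div_iff₀ hT0]
  nlinarith [mul_nonneg hP0 hu0.le]


/-- For a Zipf law `p(x) = C_α x^{−α}` with `α > 1` on the positive integers, the missing
mass `Σ_x p(x)(1−p(x))^T` is bounded above and below by constant multiples of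
`T^{−1+1/α}`. -/
theorem missing_mass_scaling (α C : ℝ) (hα : 1 < α) (hC : 0 < C)
    (p : ℕ+ → ℝ) (hp : ∀ x : ℕ+, p x = C * (x : ℝ) ^ (-α))
    (hsum : ∑' x : ℕ+, p x = 1) :
    ∃ c₁ c₂ : ℝ, 0 < c₁ ∧ 0 < c₂ ∧ ∀ T : ℕ, 1 ≤ T →
      c₁ * (T : ℝ) ^ (-1 + 1 / α) ≤ ∑' x : ℕ+, p x * (1 - p x) ^ T ∧
      ∑' x : ℕ+, p x * (1 - p x) ^ T ≤ c₂ * (T : ℝ) ^ (-1 + 1 / α) := by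
  have hα0 : (0:ℝ) < α := by linarith
  set β : ℝ := α - 1 with hβdef
  have hβ : 0 < β := by rw [hβdef]; linarith
  -- summability of p
  have hsummable : Summable p := by
    by_contra h
    rw [tsum_eq_zero_of_not_summable h] at hsum
    norm_num at hsum
  have hx1 : ∀ x : ℕ+, (1:ℝ) ≤ (x:ℝ) := by
    intro x; exact_mod_cast x.one_le
  have hppos : ∀ x : ℕ+, 0 < p x := by
    intro x; rw [hp]
    exact mul_pos hC (Real.rpow_pos_of_pos (by linarith [hx1 x]) _)
  have hpleC : ∀ x : ℕ+, p x ≤ C := by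
    intro x; rw [hp]
    nlinarith [Real.rpow_le_one_of_one_le_of_nonpos (hx1 x) (by linarith : -α ≤ 0)]
  -- C < 1
  have hC1 : C < 1 := by
    have h12 : ((1:ℕ+) : ℕ) ≠ ((2:ℕ+) : ℕ) := by decide
    have hne : (1:ℕ+) ≠ 2 := fun h => h12 (by rw [h])
    have hsle : p 1 + p 2 ≤ ∑' x, p x := by
      have := Summable.sum_le_tsum ({1, 2} : Finset ℕ+) (fun i _ => (hppos i).le) hsummable
      rwa [Finset.sum_pair hne] at this
    have hp1 : p 1 = C := by rw [hp]; norm_num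
    rw [hsum, hp1] at hsle
    nlinarith [hppos 2]
  -- move to ℕ
  set q : ℕ → ℝ := fun n => p n.succPNat with hqdef
  have hq : ∀ n : ℕ, q n = C * ((n:ℝ) + 1) ^ (-α) := by
    intro n
    show p n.succPNat = _
    rw [hp]
    congr 2
    push_cast [Nat.succPNat_coe]
    ring
  have hqsum : Summable q := hsummable.comp_injective Nat.succPNat_injective
  have hqpos : ∀ n, 0 < q n := fun n => hppos _
  have hqleC : ∀ n, q n ≤ C := fun n => hpleC _
  have htsum : ∀ T : ℕ, ∑' x : ℕ+, p x * (1 - p x) ^ T = ∑' n : ℕ, q n * (1 - q n) ^ T :=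
    fun T => (Equiv.pnatEquivNat.symm.tsum_eq (fun x => p x * (1 - p x) ^ T)).symm
  refine ⟨C * 4 ^ (-α) * (1 - C), 2 + C / β, ?_, ?_, ?_⟩
  · have h4 : (0:ℝ) < 4 ^ (-α) := Real.rpow_pos_of_pos (by norm_num) _
    exact mul_pos (mul_pos hC h4) (by linarith)
  · positivity
  intro T hT
  have hT1 : (1:ℝ) ≤ (T:ℝ) := by exact_mod_cast hT
  have hTpos : (0:ℝ) < T := by linarith
  set R : ℝ := (T:ℝ) ^ (1/α) with hRdef
  have hR1 : 1 ≤ R := Real.one_le_rpow hT1 (by positivity)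
  set m : ℕ := ⌈R⌉₊ with hmdef
  have hmR : R ≤ (m:ℝ) := Nat.le_ceil R
  have hm1 : 1 ≤ m := by
    rw [hmdef]; exact Nat.one_le_ceil_iff.mpr (by linarith)
  have hmle : (m:ℝ) ≤ 2 * R := by
    have := Nat.ceil_lt_add_one (by linarith : (0:ℝ) ≤ R)
    rw [← hmdef] at this
    linarith
  have hRα : R ^ (-α) = 1 / (T:ℝ) := by
    rw [hRdef, ← Real.rpow_mul hTpos.le]
    rw [show (1/α) * (-α) = -1 by field_simp]
    rw [Real.rpow_neg_one]
    exact one_div (T:ℝ) |>.symm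
  have hmα : (m:ℝ) ^ (-α) ≤ 1 / (T:ℝ) := by
    rw [← hRα]
    exact Real.rpow_le_rpow_of_nonpos (by linarith) hmR (by linarith)
  -- nonnegativity and summability of the terms
  have htermnn : ∀ n, 0 ≤ q n * (1 - q n) ^ T :=
    fun n => mul_nonneg (hqpos n).le (pow_nonneg (by linarith [hqleC n]) T)
  have htermle : ∀ n, q n * (1 - q n) ^ T ≤ q n := by
    intro n
    have h1 : (1 - q n) ^ T ≤ 1 := pow_le_one₀ (by linarith [hqleC n]) (by linarith [hqpos n])
    nlinarith [hqpos n]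
  have htermsum : Summable (fun n => q n * (1 - q n) ^ T) :=
    Summable.of_nonneg_of_le htermnn htermle hqsum
  have hTid : (T:ℝ) ^ (-1 + 1/α) = R * (1 / (T:ℝ)) := by
    rw [Real.rpow_add hTpos, Real.rpow_neg_one, hRdef]
    rw [one_div]
    ring
  rw [htsum T]
  constructor
  · -- LOWER BOUND
    have hsub : ∑ n ∈ Finset.Ico (m-1) (2*m), q n * (1 - q n) ^ T ≤ ∑' n, q n * (1 - q n) ^ T :=
      Summable.sum_le_tsum _ (fun i _ => htermnn i) htermsum
    have hcard : (Finset.Ico (m-1) (2*m)).card = m + 1 := by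
      rw [Nat.card_Ico]; omega
    set A : ℝ := C * (2*(m:ℝ)) ^ (-α) * (1 - C) with hA
    have hbound : ∀ n ∈ Finset.Ico (m-1) (2*m), A ≤ q n * (1 - q n) ^ T := by
      intro n hn
      rw [Finset.mem_Ico] at hn
      have hn1 : (m:ℝ) ≤ (n:ℝ) + 1 := by
        have : m ≤ n + 1 := by omega
        exact_mod_cast this
      have hn2 : (n:ℝ) + 1 ≤ 2*(m:ℝ) := by
        have : n + 1 ≤ 2*m := by omega
        exact_mod_cast this
      have hnp : (0:ℝ) < (n:ℝ) + 1 := by positivity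
      have hmpos : (0:ℝ) < (m:ℝ) := by exact_mod_cast hm1
      have hq1 : C * (2*(m:ℝ)) ^ (-α) ≤ q n := by
        rw [hq n]
        exact mul_le_mul_of_nonneg_left
          (Real.rpow_le_rpow_of_nonpos hnp hn2 (by linarith)) hC.le
      have hq2 : q n ≤ C * (1/(T:ℝ)) := by
        rw [hq n]
        have h3 : ((n:ℝ)+1) ^ (-α) ≤ (m:ℝ) ^ (-α) :=
          Real.rpow_le_rpow_of_nonpos hmpos hn1 (by linarith)
        calc C * ((n:ℝ)+1) ^ (-α) ≤ C * (m:ℝ) ^ (-α) := mul_le_mul_of_nonneg_left h3 hC.le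
          _ ≤ C * (1/(T:ℝ)) := mul_le_mul_of_nonneg_left hmα hC.le
      have hbern : 1 - C ≤ (1 - q n) ^ T := by
        have h := one_add_mul_le_pow (a := -(q n)) (by nlinarith [hqpos n, hqleC n]) T
        have hTq : (T:ℝ) * q n ≤ C := by
          calc (T:ℝ) * q n ≤ (T:ℝ) * (C * (1/(T:ℝ))) := mul_le_mul_of_nonneg_left hq2 hTpos.le
            _ = C := by field_simp
        calc 1 - C ≤ 1 + (T:ℝ) * (-(q n)) := by linarith
          _ ≤ (1 + -(q n)) ^ T := h
          _ = (1 - q n) ^ T := by ring_nf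
      rw [hA]
      exact mul_le_mul hq1 hbern (by linarith) (hqpos n).le
    have hlow := Finset.card_nsmul_le_sum _ _ _ hbound
    rw [hcard] at hlow
    have hlow' : ((m:ℝ)+1) * A ≤ ∑' n, q n * (1 - q n) ^ T := by
      have hcast : ((m:ℝ)+1) * A = (m+1 : ℕ) • A := by
        rw [nsmul_eq_mul]; push_cast; ring
      rw [hcast]
      exact le_trans hlow hsub
    have h2m' : 4 ^ (-α) * (1/(T:ℝ)) ≤ (2*(m:ℝ)) ^ (-α) := by
      have hm2pos : (0:ℝ) < 2*(m:ℝ) := by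
        have : (0:ℝ) < (m:ℝ) := by exact_mod_cast hm1
        linarith
      have h4R : (2*(m:ℝ)) ≤ 4*R := by linarith
      have := Real.rpow_le_rpow_of_nonpos hm2pos h4R (by linarith : -α ≤ 0)
      rwa [Real.mul_rpow (by norm_num) (by linarith), hRα] at this
    have hstep : C * (4 ^ (-α) * (1/(T:ℝ))) * (1-C) ≤ A := by
      rw [hA]
      exact mul_le_mul_of_nonneg_right (mul_le_mul_of_nonneg_left h2m' hC.le) (by linarith)
    have hstep2 : R * (C * (4 ^ (-α) * (1/(T:ℝ))) * (1-C)) ≤ ((m:ℝ)+1) * A := by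
      apply mul_le_mul (by linarith) hstep ?_ (by linarith)
      have h4 : (0:ℝ) < 4 ^ (-α) := Real.rpow_pos_of_pos (by norm_num) _
      exact mul_nonneg (mul_nonneg hC.le (by positivity)) (by linarith)
    rw [hTid]
    calc C * 4 ^ (-α) * (1-C) * (R * (1/(T:ℝ)))
        = R * (C * (4 ^ (-α) * (1/(T:ℝ))) * (1-C)) := by ring
      _ ≤ ((m:ℝ)+1) * A := hstep2
      _ ≤ ∑' n, q n * (1 - q n) ^ T := hlow'
  · -- UPPER BOUND
    rw [← Summable.sum_add_tsum_nat_add m htermsum]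
    have hpiece1 : ∑ i ∈ Finset.range m, q i * (1 - q i) ^ T ≤ (m:ℝ) * (1/(T:ℝ)) := by
      have h := Finset.sum_le_card_nsmul (Finset.range m) (fun i => q i * (1 - q i) ^ T)
        (1/(T:ℝ)) (fun i _ => term_le_aux (hqpos i) (lt_of_le_of_lt (hqleC i) hC1) hT)
      rwa [Finset.card_range, nsmul_eq_mul] at h
    have hpiece2 : ∑' i, q (i+m) * (1 - q (i+m)) ^ T ≤ (C/β) * (m:ℝ) ^ (-β) := by
      apply Summable.tsum_le_of_sum_range_le ((summable_nat_add_iff m).2 htermsum)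
      intro n
      set g : ℕ → ℝ := fun i => ((i + m : ℕ) : ℝ) ^ (-β) with hgdef
      have hterm_tel : ∀ i : ℕ, q (i+m) * (1 - q (i+m)) ^ T ≤ (C/β) * (g i - g (i+1)) := by
        intro i
        set y : ℝ := ((i + m : ℕ) : ℝ) with hydef
        have hy1 : (1:ℝ) ≤ y := by
          have h' : 1 ≤ i + m := by omega
          rw [hydef]; exact_mod_cast h'
        have htele := tele_aux hβ hy1
        have hβ1 : β + 1 = α := by rw [hβdef]; ring
        have hq' : q (i+m) = C * (y + 1) ^ (-α) := by
          rw [hq (i+m)]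
        have hg1 : g (i+1) = (y + 1) ^ (-β) := by
          rw [hgdef, hydef]; push_cast; ring_nf
        have hg0 : g i = y ^ (-β) := rfl
        calc q (i+m) * (1 - q (i+m)) ^ T ≤ q (i+m) := htermle (i+m)
          _ = C * (y + 1) ^ (-α) := hq'
          _ = (C/β) * (β * (y + 1) ^ (-(β+1))) := by rw [hβ1]; field_simp
          _ ≤ (C/β) * (y ^ (-β) - (y + 1) ^ (-β)) := by
              apply mul_le_mul_of_nonneg_left htele (by positivity)
          _ = (C/β) * (g i - g (i+1)) := by rw [hg0, hg1]
      calc ∑ i ∈ Finset.range n, q (i+m) * (1 - q (i+m)) ^ T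
          ≤ ∑ i ∈ Finset.range n, (C/β) * (g i - g (i+1)) :=
            Finset.sum_le_sum (fun i _ => hterm_tel i)
        _ = (C/β) * (g 0 - g n) := by rw [← Finset.mul_sum, Finset.sum_range_sub' g n]
        _ ≤ (C/β) * (m:ℝ) ^ (-β) := by
            have hg0m : g 0 = (m:ℝ) ^ (-β) := by rw [hgdef]; norm_num
            have hgn : 0 ≤ g n := Real.rpow_nonneg (by positivity) _
            have hle : g 0 - g n ≤ (m:ℝ) ^ (-β) := by rw [hg0m]; linarith
            exact mul_le_mul_of_nonneg_left hle (by positivity)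
    have hmb : (m:ℝ) ^ (-β) ≤ (T:ℝ) ^ (-1 + 1/α) := by
      have h1 : (m:ℝ) ^ (-β) ≤ R ^ (-β) :=
        Real.rpow_le_rpow_of_nonpos (by linarith) hmR (by linarith)
      have h2 : R ^ (-β) = (T:ℝ) ^ (-1 + 1/α) := by
        rw [hRdef, ← Real.rpow_mul hTpos.le]
        congr 1
        rw [hβdef]
        field_simp
        ring
      linarith [h1, h2.le, h2.ge]
    have hma : (m:ℝ) * (1/(T:ℝ)) ≤ 2 * (T:ℝ) ^ (-1 + 1/α) := by
      rw [hTid]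
      calc (m:ℝ) * (1/(T:ℝ)) ≤ (2*R) * (1/(T:ℝ)) :=
            mul_le_mul_of_nonneg_right hmle (by positivity)
        _ = 2 * (R * (1/(T:ℝ))) := by ring
    calc (∑ i ∈ Finset.range m, q i * (1 - q i) ^ T) + ∑' i, q (i+m) * (1 - q (i+m)) ^ T
        ≤ (m:ℝ) * (1/(T:ℝ)) + (C/β) * (m:ℝ) ^ (-β) := add_le_add hpiece1 hpiece2
      _ ≤ 2 * (T:ℝ) ^ (-1 + 1/α) + (C/β) * ((T:ℝ) ^ (-1 + 1/α)) :=
          add_le_add hma (mul_le_mul_of_nonneg_left hmb (by positivity))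
      _ = (2 + C/β) * (T:ℝ) ^ (-1 + 1/α) := by ring
end

section
/- For any decreasing probability mass function p on [N] and T ≥ 1, the sum Σ_{x=1}^N p(x) exp(−p(x)T) differs from the integral ∫_1^N p(x)exp(−p(x)T)dx by at most 1/T. -/
open Real

lemma gHasDeriv (T s : ℝ) :
    HasDerivAt (fun s : ℝ => s * Real.exp (-s * T)) ((1 - s * T) * Real.exp (-s * T)) s := by
  have h1 : HasDerivAt (fun s : ℝ => -s * T) (-T) s := by
    simpa using ((hasDerivAt_id s).neg.mul_const T)
  have h2 := h1.exp
  have h3 := (hasDerivAt_id' s).fun_mul h2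
  refine h3.congr_deriv ?_
  simp; ring

lemma gCont (T : ℝ) : Continuous (fun s : ℝ => s * Real.exp (-s * T)) :=
  Continuous.mul continuous_id (Real.continuous_exp.comp (by continuity))

lemma gMono {T : ℝ} (hT : 0 < T) :
    MonotoneOn (fun s : ℝ => s * Real.exp (-s * T)) (Set.Icc 0 (1 / T)) := by
  apply monotoneOn_of_deriv_nonneg (convex_Icc _ _) (gCont T).continuousOn
  · intro x hx
    exact (gHasDeriv T x).differentiableAt.differentiableWithinAt
  · intro x hx
    rw [interior_Icc, Set.mem_Ioo] at hx
    rw [(gHasDeriv T x).deriv]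
    have h1 : x * T < 1 := (lt_div_iff₀ hT).mp hx.2
    have h2 := Real.exp_pos (-x * T)
    nlinarith

lemma gAnti {T : ℝ} (hT : 0 < T) :
    AntitoneOn (fun s : ℝ => s * Real.exp (-s * T)) (Set.Ici (1 / T)) := by
  apply antitoneOn_of_deriv_nonpos (convex_Ici _) (gCont T).continuousOn
  · intro x hx
    exact (gHasDeriv T x).differentiableAt.differentiableWithinAt
  · intro x hx
    rw [interior_Ici, Set.mem_Ioi] at hx
    rw [(gHasDeriv T x).deriv]
    have h1 : 1 < x * T := (div_lt_iff₀ hT).mp hx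
    have h2 := Real.exp_pos (-x * T)
    nlinarith

lemma gBound {T : ℝ} (hT : 1 ≤ T) {s : ℝ} (hs : 0 ≤ s) :
    s * Real.exp (-s * T) ≤ 1 / (2 * T) := by
  have hT0 : 0 < T := lt_of_lt_of_le one_pos hT
  have hexp : 2 * (s * T) ≤ Real.exp (s * T) := by
    have h1 := Real.add_one_le_exp (s * T / 2)
    have h2 : Real.exp (s * T) = Real.exp (s * T / 2) * Real.exp (s * T / 2) := by
      rw [← Real.exp_add]; ring_nf
    have h3 : (s * T / 2 + 1) * (s * T / 2 + 1) ≤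
        Real.exp (s * T / 2) * Real.exp (s * T / 2) :=
      mul_le_mul h1 h1 (by positivity) (Real.exp_pos _).le
    nlinarith [sq_nonneg (s * T / 2 - 1)]
  have hE := Real.exp_pos (s * T)
  rw [neg_mul, Real.exp_neg, le_div_iff₀ (by positivity : (0:ℝ) < 2 * T)]
  have heq : s * (Real.exp (s * T))⁻¹ * (2 * T) = (2 * (s * T)) / Real.exp (s * T) := by
    rw [div_eq_mul_inv]; ring
  rw [heq]
  exact div_le_one_of_le₀ hexp hE.le

lemma sum_shift (f : ℝ → ℝ) (a b : ℕ) :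
    ∑ i ∈ Finset.Ico a b, f (↑(i + 1)) = ∑ j ∈ Finset.Icc (a + 1) b, f ↑j := by
  rw [← Finset.Ico_add_one_right_eq_Icc]
  exact Finset.sum_Ico_add' (fun j : ℕ => f ↑j) a b 1

lemma sum_Icc_split_top (f : ℝ → ℝ) {a b : ℕ} (hab : a ≤ b) :
    ∑ i ∈ Finset.Icc a b, f ↑i = (∑ i ∈ Finset.Ico a b, f ↑i) + f ↑b := by
  rw [← Finset.Ico_add_one_right_eq_Icc, Finset.sum_Ico_succ_top hab]

set_option maxHeartbeats 1000000 in
/-- For a nonincreasing probability mass function `p` on `[1, N]` with values in `[0,1]`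
and `T ≥ 1`, the sum `Σ_{x=1}^N p(x) exp(−p(x)T)` differs from the corresponding
integral `∫_1^N p(x) exp(−p(x)T) dx` by at most `1/T`. -/
theorem sum_integral_comparison (N : ℕ) (hN : 1 ≤ N) (p : ℝ → ℝ)
    (hp0 : ∀ x ∈ Set.Icc (1 : ℝ) N, 0 ≤ p x ∧ p x ≤ 1)
    (hmono : AntitoneOn p (Set.Icc (1 : ℝ) N))
    (hmass : ∑ x ∈ Finset.Icc 1 N, p x ≤ 1)
    (T : ℝ) (hT : 1 ≤ T) :
    |(∑ x ∈ Finset.Icc 1 N, p x * Real.exp (-p x * T)) -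
        ∫ x in (1 : ℝ)..N, p x * Real.exp (-p x * T)| ≤ 1 / T := by
  have hT0 : (0:ℝ) < T := lt_of_lt_of_le one_pos hT
  have hN1 : (1:ℝ) ≤ (N:ℝ) := by exact_mod_cast hN
  set f : ℝ → ℝ := fun x => p x * Real.exp (-p x * T) with hfdef
  have hf0 : ∀ x ∈ Set.Icc (1:ℝ) N, 0 ≤ f x := fun x hx =>
    mul_nonneg (hp0 x hx).1 (Real.exp_pos _).le
  have hfB : ∀ x ∈ Set.Icc (1:ℝ) N, f x ≤ 1 / (2 * T) := fun x hx =>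
    gBound hT (hp0 x hx).1
  have h2T : 1 / (2 * T) + 1 / (2 * T) = 1 / T := by
    rw [← add_div, mul_comm, ← div_div, div_right_comm]
    norm_num
  have h2T' : 1 / (2 * T) ≤ 1 / T := by
    rw [← h2T]; have : (0:ℝ) < 1/(2*T) := by positivity
    linarith
  -- integrability
  have hpm : AEMeasurable p (MeasureTheory.volume.restrict (Set.Icc (1:ℝ) N)) :=
    aemeasurable_restrict_of_antitoneOn measurableSet_Icc hmono
  have hfmeas : MeasureTheory.AEStronglyMeasurable f
      (MeasureTheory.volume.restrict (Set.Icc (1:ℝ) N)) :=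
    (hpm.mul (Real.measurable_exp.comp_aemeasurable (hpm.neg.mul_const T))).aestronglyMeasurable
  have hInt : MeasureTheory.IntegrableOn f (Set.Icc (1:ℝ) N) := by
    refine ⟨hfmeas, MeasureTheory.HasFiniteIntegral.restrict_of_bounded
      (C := 1 / (2 * T)) measure_Icc_lt_top ?_⟩
    filter_upwards [MeasureTheory.ae_restrict_mem measurableSet_Icc] with x hx
    rw [Real.norm_eq_abs, abs_of_nonneg (hf0 x hx)]
    exact hfB x hx
  have hII : ∀ a b : ℝ, 1 ≤ a → a ≤ b → b ≤ N → IntervalIntegrable f MeasureTheory.volume a b := by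
    intro a b ha hab hbN
    refine (hInt.mono_set ?_).intervalIntegrable
    rw [Set.uIcc_of_le hab]
    exact Set.Icc_subset_Icc ha hbN
  -- monotonicity transfer
  have hfmono : ∀ c : ℝ, 1 ≤ c → c ≤ N → 1 / T ≤ p c → MonotoneOn f (Set.Icc (1:ℝ) c) := by
    intro c h1c hcN hpc x hx y hy hxy
    have hxI : x ∈ Set.Icc (1:ℝ) N := ⟨hx.1, hx.2.trans hcN⟩
    have hyI : y ∈ Set.Icc (1:ℝ) N := ⟨hy.1, hy.2.trans hcN⟩
    have hcI : c ∈ Set.Icc (1:ℝ) N := ⟨h1c, hcN⟩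
    have hpy : 1 / T ≤ p y := hpc.trans (hmono hyI hcI hy.2)
    have hpx : 1 / T ≤ p x := hpc.trans (hmono hxI hcI (hxy.trans hy.2))
    exact gAnti hT0 hpy hpx (hmono hxI hyI hxy)
  have hfanti : ∀ c : ℝ, 1 ≤ c → c ≤ N → p c ≤ 1 / T → AntitoneOn f (Set.Icc c (N:ℝ)) := by
    intro c h1c hcN hpc x hx y hy hxy
    have hxI : x ∈ Set.Icc (1:ℝ) N := ⟨h1c.trans hx.1, hx.2⟩
    have hyI : y ∈ Set.Icc (1:ℝ) N := ⟨h1c.trans hy.1, hy.2⟩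
    have hcI : c ∈ Set.Icc (1:ℝ) N := ⟨h1c, hcN⟩
    have hpx : p x ≤ 1 / T := (hmono hcI hxI hx.1).trans hpc
    have hpy : p y ≤ 1 / T := (hmono hcI hyI hy.1).trans hpc
    exact gMono hT0 ⟨(hp0 y hyI).1, hpy⟩ ⟨(hp0 x hxI).1, hpx⟩ (hmono hxI hyI hxy)
  rw [show (∑ x ∈ Finset.Icc 1 N, p ↑x * Real.exp (-p ↑x * T)) =
      ∑ i ∈ Finset.Icc 1 N, f ↑i from rfl]
  rw [abs_le]
  by_cases hp1 : 1 / T ≤ p 1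
  case neg =>
    -- f is antitone on the whole interval
    have hA : AntitoneOn f (Set.Icc (1:ℝ) (N:ℝ)) := hfanti 1 le_rfl hN1 (le_of_not_ge hp1)
    have hA' : AntitoneOn f (Set.Icc ((1:ℕ):ℝ) ((N:ℕ):ℝ)) := by push_cast; exact hA
    have hl : (∫ x in ((1:ℕ):ℝ)..((N:ℕ):ℝ), f x) ≤ ∑ i ∈ Finset.Ico 1 N, f ↑i :=
      hA'.integral_le_sum_Ico hN
    have hu : ∑ i ∈ Finset.Ico 1 N, f ↑(i + 1) ≤ ∫ x in ((1:ℕ):ℝ)..((N:ℕ):ℝ), f x :=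
      hA'.sum_le_integral_Ico hN
    rw [sum_shift] at hu
    have hS : ∑ i ∈ Finset.Icc 1 N, f ↑i = f 1 + ∑ i ∈ Finset.Icc 2 N, f ↑i := by
      rw [← Finset.Ico_add_one_right_eq_Icc, Finset.sum_eq_sum_Ico_succ_bot (by omega),
        Finset.Ico_add_one_right_eq_Icc]
      norm_num
    have hS' : ∑ i ∈ Finset.Ico 1 N, f ↑i ≤ ∑ i ∈ Finset.Icc 1 N, f ↑i := by
      apply Finset.sum_le_sum_of_subset_of_nonneg
      · rw [← Finset.Ico_add_one_right_eq_Icc]; exact Finset.Ico_subset_Ico le_rfl (by omega)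
      · intro i hi _
        refine hf0 _ ⟨?_, ?_⟩ <;>
          [exact_mod_cast (Finset.mem_Icc.mp hi).1; exact_mod_cast (Finset.mem_Icc.mp hi).2]
    have hf1 : f 1 ≤ 1 / (2 * T) := hfB 1 ⟨le_rfl, hN1⟩
    push_cast at hl hu
    constructor
    · have : (0:ℝ) < 1 / T := by positivity
      linarith
    · linarith
  case pos =>
    have h1K : (1:ℕ) ∈ (Finset.Icc 1 N : Finset ℕ).filter (fun k : ℕ => 1 / T ≤ p (k:ℝ)) := by
      refine Finset.mem_filter.mpr ⟨Finset.mem_Icc.mpr ⟨le_rfl, hN⟩, ?_⟩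
      push_cast
      exact hp1
    set K := (Finset.Icc 1 N : Finset ℕ).filter (fun k : ℕ => 1 / T ≤ p (k:ℝ)) with hK
    have hKne : K.Nonempty := ⟨1, h1K⟩
    set m := K.max' hKne with hm
    have hmK : m ∈ K := K.max'_mem hKne
    obtain ⟨hmIcc, hpm⟩ := Finset.mem_filter.mp hmK
    obtain ⟨hm1, hmN⟩ := Finset.mem_Icc.mp hmIcc
    have hm1' : (1:ℝ) ≤ (m:ℝ) := by exact_mod_cast hm1
    have hmN' : (m:ℝ) ≤ (N:ℝ) := by exact_mod_cast hmN
    by_cases hmeq : m = N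
    · -- f is monotone on the whole interval
      have hpN : 1 / T ≤ p (N:ℝ) := by rw [← hmeq]; exact hpm
      have hM : MonotoneOn f (Set.Icc (1:ℝ) (N:ℝ)) := hfmono N hN1 le_rfl hpN
      have hM' : MonotoneOn f (Set.Icc ((1:ℕ):ℝ) ((N:ℕ):ℝ)) := by push_cast; exact hM
      have hu : ∑ i ∈ Finset.Ico 1 N, f ↑i ≤ ∫ x in ((1:ℕ):ℝ)..((N:ℕ):ℝ), f x :=
        hM'.sum_le_integral_Ico hN
      have hl : (∫ x in ((1:ℕ):ℝ)..((N:ℕ):ℝ), f x) ≤ ∑ i ∈ Finset.Ico 1 N, f ↑(i + 1) :=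
        hM'.integral_le_sum_Ico hN
      rw [sum_shift] at hl
      have hS : ∑ i ∈ Finset.Icc 1 N, f ↑i = (∑ i ∈ Finset.Ico 1 N, f ↑i) + f ↑N :=
        sum_Icc_split_top f hN
      have hS2 : ∑ i ∈ Finset.Icc 2 N, f ↑i ≤ ∑ i ∈ Finset.Icc 1 N, f ↑i := by
        apply Finset.sum_le_sum_of_subset_of_nonneg
        · exact Finset.Icc_subset_Icc (by omega) le_rfl
        · intro i hi _
          refine hf0 _ ⟨?_, ?_⟩ <;>
            [exact_mod_cast (Finset.mem_Icc.mp hi).1; exact_mod_cast (Finset.mem_Icc.mp hi).2]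
      have hfN : f ↑N ≤ 1 / (2 * T) := hfB _ ⟨hN1, le_rfl⟩
      push_cast at hu hl
      constructor
      · have : (0:ℝ) < 1 / T := by positivity
        linarith
      · linarith
    · -- 1 ≤ m < N
      have hmltN : m < N := lt_of_le_of_ne hmN hmeq
      have hm1N : m + 1 ≤ N := hmltN
      have hpm1 : p (↑(m + 1)) ≤ 1 / T := by
        by_contra h
        push_neg at h
        have : m + 1 ∈ K := Finset.mem_filter.mpr
          ⟨Finset.mem_Icc.mpr ⟨by omega, hm1N⟩, h.le⟩
        have := K.le_max' _ this
        omega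
      have hm1R : ((m:ℝ) + 1) ≤ (N:ℝ) := by exact_mod_cast hm1N
      -- monotone on [1, m], antitone on [m+1, N]
      have hM : MonotoneOn f (Set.Icc ((1:ℕ):ℝ) ((m:ℕ):ℝ)) := by
        push_cast; exact hfmono m hm1' hmN' hpm
      have hA : AntitoneOn f (Set.Icc (((m+1:ℕ)):ℝ) ((N:ℕ):ℝ)) := by
        push_cast
        refine hfanti ((m:ℝ)+1) (by linarith) hm1R ?_
        exact_mod_cast hpm1
      -- integral split
      have i1 : IntervalIntegrable f MeasureTheory.volume 1 m := hII 1 m le_rfl hm1' hmN'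
      have i2 : IntervalIntegrable f MeasureTheory.volume m (m+1) :=
        hII m (m+1) hm1' (by linarith) hm1R
      have i3 : IntervalIntegrable f MeasureTheory.volume (m+1) N :=
        hII (m+1) N (by linarith) hm1R le_rfl
      have e2 := intervalIntegral.integral_add_adjacent_intervals i2 i3
      have e1 := intervalIntegral.integral_add_adjacent_intervals i1 (i2.trans i3)
      -- sum split
      have hSsplit : ∑ i ∈ Finset.Icc 1 N, f ↑i =
          (∑ i ∈ Finset.Icc 1 m, f ↑i) + ∑ i ∈ Finset.Icc (m+1) N, f ↑i := by
        rw [← Finset.Ico_add_one_right_eq_Icc, ← Finset.Ico_add_one_right_eq_Icc, ← Finset.Ico_add_one_right_eq_Icc,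
          ← Finset.sum_Ico_consecutive _ (by omega : 1 ≤ m + 1) (by omega : m + 1 ≤ N + 1)]
      -- bounds on [1,m]
      have hu1 : ∑ i ∈ Finset.Ico 1 m, f ↑i ≤ ∫ x in ((1:ℕ):ℝ)..((m:ℕ):ℝ), f x :=
        hM.sum_le_integral_Ico hm1
      have hl1 : (∫ x in ((1:ℕ):ℝ)..((m:ℕ):ℝ), f x) ≤ ∑ i ∈ Finset.Ico 1 m, f ↑(i + 1) :=
        hM.integral_le_sum_Ico hm1
      rw [sum_shift] at hl1
      have hS1 : ∑ i ∈ Finset.Icc 1 m, f ↑i = (∑ i ∈ Finset.Ico 1 m, f ↑i) + f ↑m :=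
        sum_Icc_split_top f hm1
      have hS1' : ∑ i ∈ Finset.Icc 2 m, f ↑i ≤ ∑ i ∈ Finset.Icc 1 m, f ↑i := by
        apply Finset.sum_le_sum_of_subset_of_nonneg
        · exact Finset.Icc_subset_Icc (by omega) le_rfl
        · intro i hi _
          have h := Finset.mem_Icc.mp hi
          refine hf0 _ ⟨by exact_mod_cast h.1, ?_⟩
          have : i ≤ N := le_trans h.2 hmN
          exact_mod_cast this
      -- bounds on [m+1,N]
      have hu2 : ∑ i ∈ Finset.Ico (m+1) N, f ↑(i + 1) ≤
          ∫ x in (((m+1:ℕ)):ℝ)..((N:ℕ):ℝ), f x :=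
        hA.sum_le_integral_Ico hm1N
      rw [sum_shift] at hu2
      have hl2 : (∫ x in (((m+1:ℕ)):ℝ)..((N:ℕ):ℝ), f x) ≤ ∑ i ∈ Finset.Ico (m+1) N, f ↑i :=
        hA.integral_le_sum_Ico hm1N
      have hS2 : ∑ i ∈ Finset.Icc (m+1) N, f ↑i =
          (∑ i ∈ Finset.Ico (m+1) N, f ↑i) + f ↑N :=
        sum_Icc_split_top f hm1N
      have hS2' : ∑ i ∈ Finset.Icc (m+1+1) N, f ↑i ≤ ∑ i ∈ Finset.Icc (m+1) N, f ↑i := by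
        apply Finset.sum_le_sum_of_subset_of_nonneg
        · exact Finset.Icc_subset_Icc (by omega) le_rfl
        · intro i hi _
          have h := Finset.mem_Icc.mp hi
          refine hf0 _ ⟨?_, by exact_mod_cast h.2⟩
          have : 1 ≤ i := by omega
          exact_mod_cast this
      have hS2b : ∑ i ∈ Finset.Icc (m+1) N, f ↑i =
          f ((m:ℝ) + 1) + ∑ i ∈ Finset.Icc (m+1+1) N, f ↑i := by
        rw [← Finset.Ico_add_one_right_eq_Icc, Finset.sum_eq_sum_Ico_succ_bot (by omega),
          Finset.Ico_add_one_right_eq_Icc]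
        push_cast
        ring
      -- middle interval
      have hI2nn : 0 ≤ ∫ x in (m:ℝ)..((m:ℝ)+1), f x := by
        apply intervalIntegral.integral_nonneg (by linarith)
        intro u hu
        exact hf0 u ⟨le_trans hm1' hu.1, le_trans hu.2 hm1R⟩
      have hI2ub : (∫ x in (m:ℝ)..((m:ℝ)+1), f x) ≤ 1 / (2 * T) := by
        have : (∫ x in (m:ℝ)..((m:ℝ)+1), f x) ≤
            ∫ _ in (m:ℝ)..((m:ℝ)+1), 1 / (2 * T) := by
          apply intervalIntegral.integral_mono_on (by linarith) i2 intervalIntegrable_const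
          intro u hu
          exact hfB u ⟨le_trans hm1' hu.1, le_trans hu.2 hm1R⟩
        simpa using this
      -- key point values
      have hfm : f ↑m ≤ 1 / (2 * T) := hfB _ ⟨hm1', hmN'⟩
      have hfm1 : f (↑m + 1) ≤ 1 / (2 * T) := hfB _ ⟨by linarith, hm1R⟩
      have hfNnn : 0 ≤ f ↑N := hf0 _ ⟨hN1, le_rfl⟩
      push_cast at hu1 hl1 hu2 hl2 e1 e2 hfm1 ⊢
      constructor
      · linarith
      · linarith
end
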